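/- arXiv:2302.01098 — 3 statements merged into one kernel-verified Lean document; each statement's English description precedes it below -/
import Mathlib

section
/- Let α > 0 and β > 0, and suppose the feasible set D is nonempty. Then there exists exactly one p* ∈ D such that R_{α,β}(p*) ≥ R_{α,β}(p) for all p ∈ D; i.e., the maximizer of R_{α,β} over D exists and is unique. -/
open Finset


/-- The average total reward `R_{α,β}(p)`, with the convention `0 · log 0 = 0`. -/
noncomputable def Ravg {S A : Type} [Fintype S] [Fintype A]
    (r : S → A → ℝ) (α β : ℝ) (p : S → A → ℝ) : ℝ :=
  (∑ s, ∑ a, p s a * r s a)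
    - α * ∑ s, ∑ a, p s a * Real.log (p s a)
    - (β - α) * ∑ s, ∑ a, p s a * Real.log (∑ b, p s b)

/-- The feasible set `D`: probability distributions on `S × A` satisfying the
stationarity constraints. Here `P s a s'` denotes `P(s'|s,a)`. -/
def Dset {S A : Type} [Fintype S] [Fintype A] (P : S → A → S → ℝ) :
    Set (S → A → ℝ) :=
  {p | (∀ s a, 0 ≤ p s a) ∧ (∑ s, ∑ a, p s a) = 1 ∧
    ∀ s' : S, (∑ s, ∑ a, P s a s' * p s a) = ∑ b, p s' b}


lemma phi_mid {x y : ℝ} (hx : 0 ≤ x) (hy : 0 ≤ y) :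
    ((x + y)/2) * Real.log ((x+y)/2) ≤ (x * Real.log x + y * Real.log y)/2 := by
  have h := Real.convexOn_mul_log.2 (Set.mem_Ici.2 hx) (Set.mem_Ici.2 hy)
      (by norm_num : (0:ℝ) ≤ 1/2) (by norm_num : (0:ℝ) ≤ 1/2) (by norm_num)
  simp only [smul_eq_mul] at h
  have e : (1:ℝ)/2*x + 1/2*y = (x+y)/2 := by ring
  rw [e] at h
  linarith

lemma phi_mid_lt {x y : ℝ} (hx : 0 ≤ x) (hy : 0 ≤ y) (hne : x ≠ y) :
    ((x + y)/2) * Real.log ((x+y)/2) < (x * Real.log x + y * Real.log y)/2 := by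
  have h := Real.strictConvexOn_mul_log.2 (Set.mem_Ici.2 hx) (Set.mem_Ici.2 hy) hne
      (by norm_num : (0:ℝ) < 1/2) (by norm_num : (0:ℝ) < 1/2) (by norm_num)
  simp only [smul_eq_mul] at h
  have e : (1:ℝ)/2*x + 1/2*y = (x+y)/2 := by ring
  rw [e] at h
  linarith

lemma logsum {x y m n : ℝ} (hx : 0 ≤ x) (hxm : x ≤ m) (hy : 0 ≤ y) (hyn : y ≤ n) :
    (x + y) * Real.log ((x + y)/(m + n)) ≤ x * Real.log (x/m) + y * Real.log (y/n) := by
  rcases eq_or_lt_of_le (hx.trans hxm) with hm | hm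
  · have hx0 : x = 0 := le_antisymm (hm ▸ hxm) hx
    simp [hx0, ← hm]
  rcases eq_or_lt_of_le (hy.trans hyn) with hn | hn
  · have hy0 : y = 0 := le_antisymm (hn ▸ hyn) hy
    simp [hy0, ← hn]
  have hmn : 0 < m + n := by linarith
  have h := Real.convexOn_mul_log.2 (Set.mem_Ici.2 (div_nonneg hx hm.le))
      (Set.mem_Ici.2 (div_nonneg hy hn.le))
      (le_of_lt (div_pos hm hmn)) (le_of_lt (div_pos hn hmn))
      (by field_simp)
  simp only [smul_eq_mul] at h
  have e1 : m/(m+n) * (x/m) + n/(m+n) * (y/n) = (x+y)/(m+n) := by field_simp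
  rw [e1] at h
  have h2 := mul_le_mul_of_nonneg_left h hmn.le
  calc (x+y) * Real.log ((x+y)/(m+n))
      = (m+n) * ((x+y)/(m+n) * Real.log ((x+y)/(m+n))) := by field_simp
    _ ≤ (m+n) * (m/(m+n) * (x/m * Real.log (x/m)) + n/(m+n) * (y/n * Real.log (y/n))) := h2
    _ = x * Real.log (x/m) + y * Real.log (y/n) := by field_simp

lemma term_eq {x m : ℝ} (hx : 0 ≤ x) (hxm : x ≤ m) :
    x * Real.log (x/m) = x * Real.log x - x * Real.log m := by
  rcases hx.eq_or_lt with h | h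
  · simp [← h]
  · have hm : 0 < m := lt_of_lt_of_le h hxm
    rw [Real.log_div h.ne' hm.ne']; ring

lemma G_rewrite {A : Type} [Fintype A] (α β : ℝ) (v : A → ℝ) (hv : ∀ a, 0 ≤ v a) :
    α * ∑ a, v a * Real.log (v a) + (β - α) * ((∑ a, v a) * Real.log (∑ a, v a))
    = β * ((∑ a, v a) * Real.log (∑ a, v a))
      + α * ∑ a, v a * Real.log (v a / ∑ b, v b) := by
  have key : ∑ a, v a * Real.log (v a / ∑ b, v b)
      = ∑ a, v a * Real.log (v a) - (∑ a, v a) * Real.log (∑ a, v a) := by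
    rw [Finset.sum_mul, ← Finset.sum_sub_distrib]
    exact Finset.sum_congr rfl fun a _ =>
      term_eq (hv a) (Finset.single_le_sum (fun b _ => hv b) (mem_univ a))
  rw [key]; ring

lemma half_div (a c : ℝ) : (a/2)/(c/2) = a/c := by
  rcases eq_or_ne c 0 with h | h
  · simp [h]
  · field_simp

lemma stateG_le {A : Type} [Fintype A] {α β : ℝ} (hα : 0 < α) (hβ : 0 < β)
    (x y : A → ℝ) (hx : ∀ a, 0 ≤ x a) (hy : ∀ a, 0 ≤ y a) :
    α * ∑ a, ((x a + y a)/2) * Real.log ((x a + y a)/2)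
      + (β - α) * ((∑ a, (x a + y a)/2) * Real.log (∑ a, (x a + y a)/2))
    ≤ ((α * ∑ a, x a * Real.log (x a)
          + (β - α) * ((∑ a, x a) * Real.log (∑ a, x a)))
       + (α * ∑ a, y a * Real.log (y a)
          + (β - α) * ((∑ a, y a) * Real.log (∑ a, y a))))/2 := by
  have hu : ∀ a, 0 ≤ (x a + y a)/2 := fun a => by have := hx a; have := hy a; linarith
  have hM : (∑ a, (x a + y a)/2) = ((∑ a, x a) + ∑ a, y a)/2 := by
    rw [← Finset.sum_add_distrib, Finset.sum_div]
  rw [G_rewrite α β _ hu, G_rewrite α β x hx, G_rewrite α β y hy]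
  have hm0 : 0 ≤ ∑ a, x a := Finset.sum_nonneg fun a _ => hx a
  have hn0 : 0 ≤ ∑ a, y a := Finset.sum_nonneg fun a _ => hy a
  have hB : ((∑ a, (x a + y a)/2) * Real.log (∑ a, (x a + y a)/2))
      ≤ ((∑ a, x a) * Real.log (∑ a, x a) + (∑ a, y a) * Real.log (∑ a, y a))/2 := by
    rw [hM]; exact phi_mid hm0 hn0
  have hC : (∑ a, ((x a + y a)/2) * Real.log (((x a + y a)/2) / ∑ b, (x b + y b)/2))
      ≤ ((∑ a, x a * Real.log (x a / ∑ b, x b))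
         + ∑ a, y a * Real.log (y a / ∑ b, y b))/2 := by
    have step : ∀ a ∈ (univ : Finset A),
        ((x a + y a)/2) * Real.log (((x a + y a)/2) / ∑ b, (x b + y b)/2)
        ≤ (x a * Real.log (x a / ∑ b, x b) + y a * Real.log (y a / ∑ b, y b))/2 := by
      intro a _
      have e : ((x a + y a)/2) / (∑ b, (x b + y b)/2)
          = (x a + y a) / ((∑ b, x b) + ∑ b, y b) := by
        rw [hM, half_div]
      rw [e]
      have h := logsum (hx a) (Finset.single_le_sum (fun b _ => hx b) (mem_univ a))
        (hy a) (Finset.single_le_sum (fun b _ => hy b) (mem_univ a))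
      linarith
    calc (∑ a, ((x a + y a)/2) * Real.log (((x a + y a)/2) / ∑ b, (x b + y b)/2))
        ≤ ∑ a, (x a * Real.log (x a / ∑ b, x b) + y a * Real.log (y a / ∑ b, y b))/2 :=
          Finset.sum_le_sum step
      _ = ((∑ a, x a * Real.log (x a / ∑ b, x b))
           + ∑ a, y a * Real.log (y a / ∑ b, y b))/2 := by
          rw [← Finset.sum_div, Finset.sum_add_distrib]
  nlinarith [mul_le_mul_of_nonneg_left hB hβ.le, mul_le_mul_of_nonneg_left hC hα.le]

lemma stateG_lt {A : Type} [Fintype A] {α β : ℝ} (hα : 0 < α) (hβ : 0 < β)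
    (x y : A → ℝ) (hx : ∀ a, 0 ≤ x a) (hy : ∀ a, 0 ≤ y a) (hne : x ≠ y) :
    α * ∑ a, ((x a + y a)/2) * Real.log ((x a + y a)/2)
      + (β - α) * ((∑ a, (x a + y a)/2) * Real.log (∑ a, (x a + y a)/2))
    < ((α * ∑ a, x a * Real.log (x a)
          + (β - α) * ((∑ a, x a) * Real.log (∑ a, x a)))
       + (α * ∑ a, y a * Real.log (y a)
          + (β - α) * ((∑ a, y a) * Real.log (∑ a, y a))))/2 := by
  have hu : ∀ a, 0 ≤ (x a + y a)/2 := fun a => by have := hx a; have := hy a; linarith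
  have hM : (∑ a, (x a + y a)/2) = ((∑ a, x a) + ∑ a, y a)/2 := by
    rw [← Finset.sum_add_distrib, Finset.sum_div]
  obtain ⟨a₀, ha₀⟩ := Function.ne_iff.1 hne
  by_cases hmn : (∑ a, x a) = ∑ a, y a
  · -- equal marginals: strict convexity in the entropy term
    have hsum : (∑ a, ((x a + y a)/2) * Real.log ((x a + y a)/2))
        < ((∑ a, x a * Real.log (x a)) + ∑ a, y a * Real.log (y a))/2 := by
      have e : ((∑ a, x a * Real.log (x a)) + ∑ a, y a * Real.log (y a))/2
          = ∑ a, (x a * Real.log (x a) + y a * Real.log (y a))/2 := by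
        rw [← Finset.sum_div, Finset.sum_add_distrib]
      rw [e]
      refine Finset.sum_lt_sum (fun a _ => phi_mid (hx a) (hy a)) ⟨a₀, mem_univ a₀,
        phi_mid_lt (hx a₀) (hy a₀) ha₀⟩
    have hMar : (∑ a, (x a + y a)/2) = ∑ a, x a := by rw [hM, hmn]; ring
    have e2 : ((∑ a, x a) * Real.log (∑ a, x a) + (∑ a, y a) * Real.log (∑ a, y a))/2
        = (∑ a, x a) * Real.log (∑ a, x a) := by rw [← hmn]; ring
    rw [hMar]
    nlinarith [mul_lt_mul_of_pos_left hsum hα]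
  · -- different marginals: strict in β-part, ≤ in α-part
    have hm0 : 0 ≤ ∑ a, x a := Finset.sum_nonneg fun a _ => hx a
    have hn0 : 0 ≤ ∑ a, y a := Finset.sum_nonneg fun a _ => hy a
    rw [G_rewrite α β _ hu, G_rewrite α β x hx, G_rewrite α β y hy]
    have hB : ((∑ a, (x a + y a)/2) * Real.log (∑ a, (x a + y a)/2))
        < ((∑ a, x a) * Real.log (∑ a, x a) + (∑ a, y a) * Real.log (∑ a, y a))/2 := by
      rw [hM]; exact phi_mid_lt hm0 hn0 hmn
    have hC : (∑ a, ((x a + y a)/2) * Real.log (((x a + y a)/2) / ∑ b, (x b + y b)/2))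
        ≤ ((∑ a, x a * Real.log (x a / ∑ b, x b))
           + ∑ a, y a * Real.log (y a / ∑ b, y b))/2 := by
      have step : ∀ a ∈ (univ : Finset A),
          ((x a + y a)/2) * Real.log (((x a + y a)/2) / ∑ b, (x b + y b)/2)
          ≤ (x a * Real.log (x a / ∑ b, x b) + y a * Real.log (y a / ∑ b, y b))/2 := by
        intro a _
        have e : ((x a + y a)/2) / (∑ b, (x b + y b)/2)
            = (x a + y a) / ((∑ b, x b) + ∑ b, y b) := by
          rw [hM, half_div]
        rw [e]
        have h := logsum (hx a) (Finset.single_le_sum (fun b _ => hx b) (mem_univ a))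
          (hy a) (Finset.single_le_sum (fun b _ => hy b) (mem_univ a))
        linarith
      calc (∑ a, ((x a + y a)/2) * Real.log (((x a + y a)/2) / ∑ b, (x b + y b)/2))
          ≤ ∑ a, (x a * Real.log (x a / ∑ b, x b) + y a * Real.log (y a / ∑ b, y b))/2 :=
            Finset.sum_le_sum step
        _ = ((∑ a, x a * Real.log (x a / ∑ b, x b))
             + ∑ a, y a * Real.log (y a / ∑ b, y b))/2 := by
            rw [← Finset.sum_div, Finset.sum_add_distrib]
    nlinarith [mul_lt_mul_of_pos_left hB hβ, mul_le_mul_of_nonneg_left hC hα.le]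

lemma Ravg_eq {S A : Type} [Fintype S] [Fintype A]
    (r : S → A → ℝ) (α β : ℝ) (p : S → A → ℝ) :
    Ravg r α β p = (∑ s, ∑ a, p s a * r s a)
      - ∑ s, (α * ∑ a, p s a * Real.log (p s a)
          + (β - α) * ((∑ a, p s a) * Real.log (∑ a, p s a))) := by
  unfold Ravg
  have h1 : ∀ s : S, ∑ a, p s a * Real.log (∑ b, p s b)
      = (∑ a, p s a) * Real.log (∑ a, p s a) := fun s => (Finset.sum_mul _ _ _).symm
  simp_rw [h1]
  rw [Finset.sum_add_distrib, ← Finset.mul_sum, ← Finset.mul_sum]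
  ring

lemma ravg_mid {S A : Type} [Fintype S] [Fintype A]
    {r : S → A → ℝ} {α β : ℝ} (hα : 0 < α) (hβ : 0 < β)
    {p q : S → A → ℝ} (hp : ∀ s a, 0 ≤ p s a) (hq : ∀ s a, 0 ≤ q s a) (hne : p ≠ q) :
    (Ravg r α β p + Ravg r α β q)/2
      < Ravg r α β (fun s a => (p s a + q s a)/2) := by
  rw [Ravg_eq, Ravg_eq, Ravg_eq]
  have hlin : (∑ s, ∑ a, ((p s a + q s a)/2) * r s a)
      = ((∑ s, ∑ a, p s a * r s a) + ∑ s, ∑ a, q s a * r s a)/2 := by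
    rw [← Finset.sum_add_distrib, Finset.sum_div]
    refine Finset.sum_congr rfl fun s _ => ?_
    rw [← Finset.sum_add_distrib, Finset.sum_div]
    exact Finset.sum_congr rfl fun a _ => by ring
  obtain ⟨s₀, hs₀⟩ := Function.ne_iff.1 hne
  have hent : (∑ s, (α * ∑ a, ((p s a + q s a)/2) * Real.log ((p s a + q s a)/2)
      + (β - α) * ((∑ a, (p s a + q s a)/2) * Real.log (∑ a, (p s a + q s a)/2))))
      < ((∑ s, (α * ∑ a, p s a * Real.log (p s a)
          + (β - α) * ((∑ a, p s a) * Real.log (∑ a, p s a))))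
        + ∑ s, (α * ∑ a, q s a * Real.log (q s a)
          + (β - α) * ((∑ a, q s a) * Real.log (∑ a, q s a))))/2 := by
    have e : ((∑ s, (α * ∑ a, p s a * Real.log (p s a)
          + (β - α) * ((∑ a, p s a) * Real.log (∑ a, p s a))))
        + ∑ s, (α * ∑ a, q s a * Real.log (q s a)
          + (β - α) * ((∑ a, q s a) * Real.log (∑ a, q s a))))/2
        = ∑ s, ((α * ∑ a, p s a * Real.log (p s a)
          + (β - α) * ((∑ a, p s a) * Real.log (∑ a, p s a))
          + (α * ∑ a, q s a * Real.log (q s a)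
          + (β - α) * ((∑ a, q s a) * Real.log (∑ a, q s a))))/2) := by
      rw [← Finset.sum_add_distrib, Finset.sum_div]
    rw [e]
    refine Finset.sum_lt_sum
      (fun s _ => stateG_le hα hβ (p s) (q s) (hp s) (hq s))
      ⟨s₀, mem_univ s₀, stateG_lt hα hβ (p s₀) (q s₀) (hp s₀) (hq s₀) hs₀⟩
  rw [hlin]
  linarith

lemma sum2_avg {S A : Type} [Fintype S] [Fintype A] (f g : S → A → ℝ) :
    ∑ s, ∑ a, (f s a + g s a)/2 = ((∑ s, ∑ a, f s a) + ∑ s, ∑ a, g s a)/2 := by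
  rw [← Finset.sum_add_distrib, Finset.sum_div]
  refine Finset.sum_congr rfl fun s _ => ?_
  rw [← Finset.sum_add_distrib, Finset.sum_div]

lemma continuous_eval {S A : Type} [Fintype S] [Fintype A] (s : S) (a : A) :
    Continuous (fun p : S → A → ℝ => p s a) :=
  (continuous_apply a).comp (continuous_apply s)

lemma dset_isClosed {S A : Type} [Fintype S] [Fintype A] (P : S → A → S → ℝ) :
    IsClosed (Dset P (S := S) (A := A)) := by
  have h1 : IsClosed {p : S → A → ℝ | ∀ s a, 0 ≤ p s a} := by
    have e : {p : S → A → ℝ | ∀ s a, 0 ≤ p s a} = ⋂ s, ⋂ a, {p | 0 ≤ p s a} := by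
      ext p; simp [Set.mem_iInter]
    rw [e]
    exact isClosed_iInter fun s => isClosed_iInter fun a =>
      isClosed_le continuous_const (continuous_eval s a)
  have hsum : Continuous (fun p : S → A → ℝ => ∑ s, ∑ a, p s a) :=
    continuous_finset_sum _ fun s _ => continuous_finset_sum _ fun a _ =>
      continuous_eval s a
  have h2 : IsClosed {p : S → A → ℝ | (∑ s, ∑ a, p s a) = 1} :=
    isClosed_eq hsum continuous_const
  have h3 : IsClosed {p : S → A → ℝ |
      ∀ s' : S, (∑ s, ∑ a, P s a s' * p s a) = ∑ b, p s' b} := by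
    have e : {p : S → A → ℝ | ∀ s' : S, (∑ s, ∑ a, P s a s' * p s a) = ∑ b, p s' b}
        = ⋂ s', {p : S → A → ℝ | (∑ s, ∑ a, P s a s' * p s a) = ∑ b, p s' b} := by
      ext p; simp [Set.mem_iInter]
    rw [e]
    refine isClosed_iInter fun s' => isClosed_eq ?_ ?_
    · exact continuous_finset_sum _ fun s _ => continuous_finset_sum _ fun a _ =>
        continuous_const.mul (continuous_eval s a)
    · exact continuous_finset_sum _ fun b _ => continuous_eval s' b
  have e : Dset P (S := S) (A := A) = {p : S → A → ℝ | ∀ s a, 0 ≤ p s a}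
      ∩ ({p : S → A → ℝ | (∑ s, ∑ a, p s a) = 1}
        ∩ {p : S → A → ℝ | ∀ s' : S, (∑ s, ∑ a, P s a s' * p s a) = ∑ b, p s' b}) := by
    ext p; simp [Dset, Set.mem_inter_iff]
  rw [e]
  exact h1.inter (h2.inter h3)

lemma dset_isCompact {S A : Type} [Fintype S] [Fintype A] (P : S → A → S → ℝ) :
    IsCompact (Dset P (S := S) (A := A)) := by
  have hK : IsCompact (Set.pi Set.univ fun _ : S =>
      Set.pi Set.univ fun _ : A => Set.Icc (0:ℝ) 1) :=
    isCompact_univ_pi fun _ => isCompact_univ_pi fun _ => isCompact_Icc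
  refine hK.of_isClosed_subset (dset_isClosed P) ?_
  rintro p ⟨hp0, hp1, -⟩
  intro s _
  intro a _
  refine ⟨hp0 s a, ?_⟩
  have h1 : p s a ≤ ∑ a', p s a' :=
    Finset.single_le_sum (fun b _ => hp0 s b) (mem_univ a)
  have h2 : (∑ a', p s a') ≤ ∑ s', ∑ a', p s' a' :=
    Finset.single_le_sum (f := fun s' => ∑ a', p s' a')
      (fun s' _ => Finset.sum_nonneg fun b _ => hp0 s' b) (mem_univ s)
  calc p s a ≤ _ := h1
    _ ≤ _ := h2
    _ = 1 := hp1

lemma ravg_continuous {S A : Type} [Fintype S] [Fintype A]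
    (r : S → A → ℝ) (α β : ℝ) : Continuous (Ravg r α β (S := S) (A := A)) := by
  have e : Ravg r α β (S := S) (A := A) = fun p =>
      (∑ s, ∑ a, p s a * r s a)
      - ∑ s, (α * ∑ a, p s a * Real.log (p s a)
          + (β - α) * ((∑ a, p s a) * Real.log (∑ a, p s a))) := by
    funext p; exact Ravg_eq r α β p
  rw [e]
  refine Continuous.sub ?_ ?_
  · exact continuous_finset_sum _ fun s _ => continuous_finset_sum _ fun a _ =>
      (continuous_eval s a).mul continuous_const
  · refine continuous_finset_sum _ fun s _ => Continuous.add ?_ ?_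
    · exact continuous_const.mul (continuous_finset_sum _ fun a _ =>
        Real.continuous_mul_log.comp (continuous_eval s a))
    · exact continuous_const.mul (Real.continuous_mul_log.comp
        (continuous_finset_sum _ fun a _ => continuous_eval s a))


/-- for `α > 0`, `β > 0` and `D` nonempty, the maximizer of
`R_{α,β}` over `D` exists and is unique. -/
theorem exists_unique_maximizer {S A : Type} [Fintype S] [Fintype A]
    [Nonempty S] [Nonempty A]
    (P : S → A → S → ℝ) (hP0 : ∀ s a s', 0 ≤ P s a s')
    (hP1 : ∀ s a, (∑ s', P s a s') = 1)
    (r : S → A → ℝ) (α β : ℝ) (hα : 0 < α) (hβ : 0 < β)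
    (hD : (Dset P (S := S) (A := A)).Nonempty) :
    ∃! p : S → A → ℝ, p ∈ Dset P ∧
      ∀ q ∈ Dset P, Ravg r α β q ≤ Ravg r α β p := by
  obtain ⟨p, hpD, hmax⟩ := (dset_isCompact P).exists_isMaxOn hD
    (ravg_continuous r α β).continuousOn
  refine ⟨p, ⟨hpD, fun q hq => hmax hq⟩, ?_⟩
  rintro q ⟨hqD, hqmax⟩
  by_contra hne
  have h1 : Ravg r α β q = Ravg r α β p := le_antisymm (hmax hqD) (hqmax p hpD)
  have huD : (fun s a => (q s a + p s a)/2) ∈ Dset P := by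
    refine ⟨fun s a => ?_, ?_, fun s' => ?_⟩
    · have := hqD.1 s a; have := hpD.1 s a
      simp only []
      linarith
    · show (∑ s, ∑ a, (q s a + p s a)/2) = 1
      rw [sum2_avg q p, hqD.2.1, hpD.2.1]; norm_num
    · show (∑ s, ∑ a, P s a s' * ((q s a + p s a)/2)) = ∑ b, (q s' b + p s' b)/2
      have e1 : (∑ s, ∑ a, P s a s' * ((q s a + p s a)/2))
          = ∑ s, ∑ a, ((P s a s' * q s a) + (P s a s' * p s a))/2 :=
        Finset.sum_congr rfl fun s _ => Finset.sum_congr rfl fun a _ => by ring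
      rw [e1, sum2_avg, hqD.2.2 s', hpD.2.2 s']
      rw [← Finset.sum_add_distrib, Finset.sum_div]
  have hmid := ravg_mid (r := r) hα hβ hqD.1 hpD.1 hne
  have hle : Ravg r α β (fun s a => (q s a + p s a)/2) ≤ Ravg r α β p := hmax huD
  rw [h1] at hmid
  linarith
end

section
/- Let α > 0 and β > 0, and suppose the feasible set D is nonempty. Then the supremum over p ∈ D of R_{α,β}(p) is attained, and it equals the infimum over V : S → ℝ of β · log Z_V (strong duality). -/
open Finset

/-- The advantage `A_V(s,a) = r(s,a) + Σ_{s'} V(s') P(s'|s,a) − V(s)`. -/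
noncomputable def Adv {S A : Type} [Fintype S]
    (P : S → A → S → ℝ) (r : S → A → ℝ) (V : S → ℝ) (s : S) (a : A) : ℝ :=
  r s a + (∑ s', V s' * P s a s') - V s

/-- The partition function `Z_V = Σ_s (Σ_a exp(A_V(s,a)/α))^{α/β}`. -/
noncomputable def Zfun {S A : Type} [Fintype S] [Fintype A]
    (P : S → A → S → ℝ) (r : S → A → ℝ) (α β : ℝ) (V : S → ℝ) : ℝ :=
  ∑ s, (∑ a, Real.exp (Adv P r V s a / α)) ^ (α / β)

/-!
Weak duality: replacing `r` by the advantage `A_V` adds the Lagrange term `⟨residual p, V⟩` for the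
stationarity constraints to `R_{α,β}`, and on the simplex `R_{α,β}` with reward `A_V` is at most
`β log Z_V` by Gibbs' variational inequality, applied over the actions of each state at temperature
`α` and then over the states at temperature `β`; equality holds at the nested softmax policy.

Strong duality: `R_{α,β}` is continuous and concave on the compact simplex, so the pairs
`(residual p, t)` with `t ≤ R_{α,β}(p)` form a closed convex set. For `m` above the maximum over `D`
it misses `(0, m)`, and the separating hyperplane, normalised in the `t`-direction, yields a
multiplier `V` with `β log Z_V < m`.
-/

open Real
open scoped Pointwise Matrix

theorem mul_sub_mul_log_div_le {x y : ℝ} (c : ℝ) (hx : 0 ≤ x) (hxy : x ≤ y) :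
    c * x - x * log (x / y) ≤ y * exp (c - 1) := by
  rcases hx.eq_or_lt with rfl | hx
  · simpa using mul_nonneg hxy (exp_pos _).le
  have hy : 0 < y := hx.trans_le hxy
  calc c * x - x * log (x / y) = x * (c - 1 - log (x / y) + 1) := by ring
    _ ≤ x * exp (c - 1 - log (x / y)) := by gcongr; exact add_one_le_exp _
    _ = y * exp (c - 1) := by
      rw [exp_sub, exp_log (by positivity)]; field_simp

theorem convexOn_mul_log_div :
    ConvexOn ℝ {z : ℝ × ℝ | 0 ≤ z.1 ∧ z.1 ≤ z.2} fun z => z.1 * log (z.1 / z.2) := by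
  refine ⟨?_, ?_⟩
  · rintro ⟨x₁, y₁⟩ ⟨hx₁ : 0 ≤ x₁, h₁ : x₁ ≤ y₁⟩ ⟨x₂, y₂⟩ ⟨hx₂ : 0 ≤ x₂, h₂ : x₂ ≤ y₂⟩
      a b ha hb -
    simp only [Set.mem_ofPred_eq, Prod.smul_mk, Prod.mk_add_mk, smul_eq_mul]
    constructor
    · positivity
    · gcongr
  rintro ⟨x₁, y₁⟩ ⟨hx₁ : 0 ≤ x₁, h₁ : x₁ ≤ y₁⟩ ⟨x₂, y₂⟩ ⟨hx₂ : 0 ≤ x₂, h₂ : x₂ ≤ y₂⟩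
    a b ha hb -
  simp only [Prod.smul_mk, Prod.mk_add_mk, smul_eq_mul]
  have hXY : a * x₁ + b * x₂ ≤ a * y₁ + b * y₂ := by gcongr
  set X := a * x₁ + b * x₂
  set Y := a * y₁ + b * y₂
  rcases (show 0 ≤ X by positivity).eq_or_lt with hX | hX
  · have ha₁ : a * x₁ = 0 := by nlinarith [mul_nonneg ha hx₁, mul_nonneg hb hx₂]
    have hb₂ : b * x₂ = 0 := by nlinarith [mul_nonneg ha hx₁, mul_nonneg hb hx₂]
    rw [← hX, ← mul_assoc, ← mul_assoc, ha₁, hb₂]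
    simp
  · have hY : 0 < Y := hX.trans_le hXY
    -- `x log (x / y) = sup_c (c x - y e^{c-1})`, attained at `c = log (x / y) + 1`.
    set c := log (X / Y) + 1
    have hc : exp (c - 1) = X / Y := by simp [c, exp_log (div_pos hX hY)]
    have e₁ := mul_sub_mul_log_div_le c hx₁ h₁
    have e₂ := mul_sub_mul_log_div_le c hx₂ h₂
    rw [hc] at e₁ e₂
    have : X * log (X / Y) = c * X - Y * (X / Y) := by field_simp; ring
    rw [this]
    nlinarith [mul_le_mul_of_nonneg_left e₁ ha, mul_le_mul_of_nonneg_left e₂ hb]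

theorem gibbs_variational_le {ι : Type*} [Fintype ι] [Nonempty ι] {w : ι → ℝ}
    (hw : ∀ i, 0 ≤ w i) (x : ι → ℝ) {c : ℝ} (hc : 0 < c) :
    ∑ i, w i * x i - c * ∑ i, w i * log (w i / ∑ j, w j)
      ≤ c * ((∑ i, w i) * log (∑ i, exp (x i / c))) := by
  set m := ∑ j, w j
  set z := ∑ i, exp (x i / c)
  have hz : 0 < z := sum_pos (fun i _ => exp_pos _) univ_nonempty
  have key : ∀ i, w i * x i / c - w i * log (w i / m)
      ≤ m * exp (x i / c) / z + w i * log z - w i := fun i => by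
    have h := mul_sub_mul_log_div_le (x i / c - log z + 1) (hw i)
      (single_le_sum (fun j _ => hw j) (mem_univ i))
    rw [add_sub_cancel_right, exp_sub, exp_log hz] at h
    linear_combination h
  have hsum := sum_le_sum fun i (_ : i ∈ univ) => key i
  simp only [sum_sub_distrib, sum_add_distrib, ← sum_div, ← mul_sum, ← sum_mul] at hsum
  rw [mul_div_cancel_right₀ _ hz.ne'] at hsum
  calc ∑ i, w i * x i - c * ∑ i, w i * log (w i / m)
      = c * ((∑ i, w i * x i) / c - ∑ i, w i * log (w i / m)) := by field_simp
    _ ≤ c * (m * log z) := by gcongr; linarith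

theorem exists_dual_add_lt_of_forall_feasible_lt {E F : Type*} [AddCommGroup E] [Module ℝ E]
    [TopologicalSpace E] [NormedAddCommGroup F] [NormedSpace ℝ F] {s : Set E} {f : E → ℝ}
    (hs : IsCompact s) (hf : ConcaveOn ℝ s f) (hfc : ContinuousOn f s) (L : E →ₗ[ℝ] F)
    (hL : ContinuousOn L s) {x₀ : E} (hx₀ : x₀ ∈ s) (hLx₀ : L x₀ = 0) {m : ℝ}
    (hm : ∀ x ∈ s, L x = 0 → f x < m) :
    ∃ φ : StrongDual ℝ F, ∀ x ∈ s, f x + φ (L x) < m := by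
  set C : Set (F × ℝ) := {z | ∃ x ∈ s, L x = z.1 ∧ z.2 ≤ f x}
  have hC_convex : Convex ℝ C := by
    have : C = L.prodMap LinearMap.id '' {z : E × ℝ | z.1 ∈ s ∧ z.2 ≤ f z.1} := by
      ext ⟨y, t⟩
      simp only [C, Set.mem_image, Set.mem_ofPred_eq, Prod.exists, LinearMap.prodMap_apply,
        LinearMap.id_apply, Prod.mk.injEq]
      exact ⟨fun ⟨x, hx, hLx, ht⟩ => ⟨x, t, ⟨hx, ht⟩, hLx, rfl⟩,
        fun ⟨x, _, ⟨hx, ht⟩, hLx, rfl⟩ => ⟨x, hx, hLx, ht⟩⟩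
    rw [this]
    exact hf.convex_hypograph.linear_image _
  have hC_closed : IsClosed C := by
    have : C = (fun x => (L x, f x)) '' s + ({0} : Set F) ×ˢ Set.Iic (0 : ℝ) := by
      ext ⟨y, t⟩
      simp only [Set.mem_ofPred_eq, Set.mem_add, Set.mem_image, Set.mem_prod,
        Set.mem_singleton_iff, Set.mem_Iic, Prod.exists, ↓existsAndEq, true_and,
        exists_exists_and_eq_and, Prod.mk_add_mk, add_zero, Prod.mk.injEq, C]
      exact ⟨fun ⟨x, hx, hLx, ht⟩ => ⟨x, hx, t - f x, by linarith, hLx, by ring⟩,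
        fun ⟨x, hx, b, hb, hLx, ht⟩ => ⟨x, hx, hLx, by linarith⟩⟩
    rw [this]
    exact (isClosed_singleton.prod isClosed_Iic).add_left_of_isCompact
      (hs.image_of_continuousOn (hL.prodMk hfc))
  have hm_notMem : ((0 : F), m) ∉ C := fun ⟨x, hx, hLx, hmx⟩ => (hm x hx hLx).not_ge hmx
  obtain ⟨Φ, u, hΦC, huΦ⟩ := geometric_hahn_banach_closed_point hC_convex hC_closed hm_notMem
  have hΦ : ∀ y t, Φ (y, t) = Φ (y, 0) + t * Φ (0, 1) := fun y t => by
    rw [← smul_eq_mul, ← map_smul, ← map_add]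
    simp
  set c := Φ (0, 1)
  -- `(0, f x₀) ∈ C` lies strictly below `(0, m)`, so `Φ` increases in the `t`-direction.
  have hc : 0 < c := by
    have h₀ := hΦC (0, f x₀) ⟨x₀, hx₀, hLx₀, le_rfl⟩
    rw [hΦ] at h₀ huΦ
    simp only [Prod.mk_zero_zero, map_zero, zero_add] at h₀ huΦ
    nlinarith [hm x₀ hx₀ hLx₀]
  refine ⟨c⁻¹ • Φ.comp (ContinuousLinearMap.inl ℝ F ℝ), fun x hx => ?_⟩
  have h := hΦC (L x, f x) ⟨x, hx, rfl, le_rfl⟩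
  rw [hΦ] at h huΦ
  simp only [Prod.mk_zero_zero, map_zero, zero_add] at huΦ
  simp only [smul_apply, ContinuousLinearMap.comp_apply,
    ContinuousLinearMap.inl_apply, smul_eq_mul]
  rw [← lt_sub_iff_add_lt', inv_mul_lt_iff₀ hc]
  linarith

variable {S A : Type} [Fintype S] [Fintype A]

variable (S A) in
def probSimplex : Set (S → A → ℝ) :=
  {p | (∀ s a, 0 ≤ p s a) ∧ ∑ s, ∑ a, p s a = 1}

theorem convex_probSimplex : Convex ℝ (probSimplex S A) := by
  rintro p ⟨hp₀, hp₁⟩ q ⟨hq₀, hq₁⟩ a b ha hb hab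
  refine ⟨fun s x => ?_, ?_⟩
  · simp only [Pi.add_apply, Pi.smul_apply, smul_eq_mul]
    have := hp₀ s x; have := hq₀ s x; positivity
  · simp only [Pi.add_apply, Pi.smul_apply, smul_eq_mul, sum_add_distrib, ← mul_sum, hp₁,
      hq₁]
    linarith

theorem isCompact_probSimplex : IsCompact (probSimplex S A) := by
  have hclosed : IsClosed (probSimplex S A) := by
    simp only [probSimplex, Set.ofPred_and, Set.ofPred_forall]
    exact (isClosed_iInter fun s => isClosed_iInter fun a =>
      isClosed_le continuous_const (by fun_prop)).inter (isClosed_eq (by fun_prop) continuous_const)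
  have hbox : IsCompact (Set.univ.pi fun _ : S => Set.univ.pi fun _ : A => Set.Icc (0 : ℝ) 1) :=
    isCompact_univ_pi fun _ => isCompact_univ_pi fun _ => isCompact_Icc
  refine hbox.of_isClosed_subset hclosed fun p ⟨hp₀, hp₁⟩ =>
    Set.mem_univ_pi.2 fun s => Set.mem_univ_pi.2 fun a => ⟨hp₀ s a, ?_⟩
  calc p s a ≤ ∑ b, p s b := single_le_sum (fun b _ => hp₀ s b) (mem_univ a)
    _ ≤ ∑ s', ∑ b, p s' b :=
      single_le_sum (f := fun s' => ∑ b, p s' b) (fun s' _ => sum_nonneg fun b _ => hp₀ s' b)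
        (mem_univ s)
    _ = 1 := hp₁

def stationarityResidual (P : S → A → S → ℝ) : (S → A → ℝ) →ₗ[ℝ] S → ℝ where
  toFun p s' := ∑ s, ∑ a, P s a s' * p s a - ∑ b, p s' b
  map_add' p q := by
    ext s'
    simp only [Pi.add_apply, mul_add, sum_add_distrib]
    ring
  map_smul' c p := by
    ext s'
    simp only [Pi.smul_apply, smul_eq_mul, RingHom.id_apply, mul_left_comm _ c, ← mul_sum,
      mul_sub]

theorem mem_Dset_iff {P : S → A → S → ℝ} {p : S → A → ℝ} :
    p ∈ Dset P ↔ p ∈ probSimplex S A ∧ stationarityResidual P p = 0 := by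
  simp only [Dset, probSimplex, Set.mem_ofPred_eq, funext_iff, stationarityResidual,
    LinearMap.coe_mk, AddHom.coe_mk, Pi.zero_apply, sub_eq_zero, and_assoc]

theorem isCompact_Dset (P : S → A → S → ℝ) : IsCompact (Dset P (S := S) (A := A)) := by
  have : Dset P = probSimplex S A ∩ stationarityResidual P ⁻¹' {0} :=
    Set.ext fun _ => mem_Dset_iff
  rw [this]
  exact isCompact_probSimplex.inter_right
    (isClosed_singleton.preimage (stationarityResidual P).continuous_of_finiteDimensional)

theorem Ravg_eq_sum_rowSum (r : S → A → ℝ) (α β : ℝ) (p : S → A → ℝ) :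
    Ravg r α β p = ∑ s, ∑ a, p s a * r s a - α * ∑ s, ∑ a, p s a * log (p s a)
      - (β - α) * ∑ s, (∑ b, p s b) * log (∑ b, p s b) := by
  simp only [Ravg, sum_mul]

theorem continuous_Ravg (r : S → A → ℝ) (α β : ℝ) : Continuous (Ravg r α β) := by
  simp only [funext (Ravg_eq_sum_rowSum r α β)]
  fun_prop

-- The chain rule `H(S, A) = H(A | S) + H(S)` for the entropy of `p`.
theorem Ravg_eq_chainRule (r : S → A → ℝ) (α β : ℝ) {p : S → A → ℝ}
    (hp : ∀ s a, 0 ≤ p s a) :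
    Ravg r α β p = ∑ s, ∑ a, p s a * r s a
      - α * ∑ s, ∑ a, p s a * log (p s a / ∑ b, p s b)
      - β * ∑ s, (∑ b, p s b) * log (∑ b, p s b) := by
  have hsplit : ∀ s a, p s a * log (p s a)
      = p s a * log (p s a / ∑ b, p s b) + p s a * log (∑ b, p s b) := fun s a => by
    rcases (hp s a).eq_or_lt with h | h
    · simp [← h]
    · rw [log_div h.ne' (h.trans_le (single_le_sum (fun b _ => hp s b) (mem_univ a))).ne']
      ring
  simp only [Ravg_eq_sum_rowSum, hsplit, sum_add_distrib, sum_mul]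
  ring

theorem concaveOn_Ravg (r : S → A → ℝ) {α β : ℝ} (hα : 0 ≤ α) (hβ : 0 ≤ β) :
    ConcaveOn ℝ (probSimplex S A) (Ravg r α β) := by
  refine ⟨convex_probSimplex, fun p hp q hq a b ha hb hab => ?_⟩
  have hrow : ∀ (p : S → A → ℝ), p ∈ probSimplex S A → ∀ s x, p s x ≤ ∑ y, p s y :=
    fun p hp s x => single_le_sum (fun y _ => hp.1 s y) (mem_univ x)
  have hrow_nonneg : ∀ (p : S → A → ℝ), p ∈ probSimplex S A → ∀ s, 0 ≤ ∑ y, p s y :=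
    fun p hp s => sum_nonneg fun y _ => hp.1 s y
  have hcond : ∀ s x,
      (a • p + b • q) s x * log ((a • p + b • q) s x / ∑ y, (a • p + b • q) s y)
        ≤ a * (p s x * log (p s x / ∑ y, p s y)) + b * (q s x * log (q s x / ∑ y, q s y)) :=
    fun s x => by
      simpa [sum_add_distrib, ← mul_sum] using convexOn_mul_log_div.2
        (x := (p s x, ∑ y, p s y)) ⟨hp.1 s x, hrow p hp s x⟩
        (y := (q s x, ∑ y, q s y)) ⟨hq.1 s x, hrow q hq s x⟩ ha hb hab
  have hmarg : ∀ s, (∑ y, (a • p + b • q) s y) * log (∑ y, (a • p + b • q) s y)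
      ≤ a * ((∑ y, p s y) * log (∑ y, p s y)) + b * ((∑ y, q s y) * log (∑ y, q s y)) :=
    fun s => by
      simpa [sum_add_distrib, ← mul_sum] using Real.convexOn_mul_log.2
        (hrow_nonneg p hp s) (hrow_nonneg q hq s) ha hb hab
  have hlin : ∑ s, ∑ x, (a • p + b • q) s x * r s x
      = a * ∑ s, ∑ x, p s x * r s x + b * ∑ s, ∑ x, q s x * r s x := by
    simp only [Pi.add_apply, Pi.smul_apply, smul_eq_mul, add_mul, sum_add_distrib, mul_sum,
      mul_assoc]
  have hcond_sum :=
    sum_le_sum fun s (_ : s ∈ univ) => sum_le_sum fun x (_ : x ∈ univ) => hcond s x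
  have hmarg_sum := sum_le_sum fun s (_ : s ∈ univ) => hmarg s
  simp only [sum_add_distrib, ← mul_sum] at hcond_sum hmarg_sum
  rw [Ravg_eq_chainRule r α β hp.1, Ravg_eq_chainRule r α β hq.1,
    Ravg_eq_chainRule r α β (convex_probSimplex hp hq ha hb hab).1, hlin, smul_eq_mul,
    smul_eq_mul]
  nlinarith [mul_le_mul_of_nonneg_left hcond_sum hα, mul_le_mul_of_nonneg_left hmarg_sum hβ]

-- Replacing the reward by the advantage turns `Ravg` into the Lagrangian of the stationarity
-- constraints, with multiplier `V`.
theorem Ravg_Adv (P : S → A → S → ℝ) (r : S → A → ℝ) (α β : ℝ) (V : S → ℝ) (p : S → A → ℝ) :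
    Ravg (Adv P r V) α β p = Ravg r α β p + stationarityResidual P p ⬝ᵥ V := by
  have hflow : ∑ s, ∑ a, p s a * ∑ s', V s' * P s a s'
      = ∑ s', (∑ s, ∑ a, P s a s' * p s a) * V s' := by
    simp only [mul_sum, sum_mul]
    conv_rhs => rw [sum_comm]; enter [2, s]; rw [sum_comm]
    exact sum_congr rfl fun s _ => sum_congr rfl fun a _ => sum_congr rfl fun s' _ => by ring
  have hdiag : ∑ s, ∑ a, p s a * V s = ∑ s, (∑ b, p s b) * V s := by simp only [sum_mul]
  simp only [Ravg, Adv, dotProduct, stationarityResidual, LinearMap.coe_mk, AddHom.coe_mk,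
    mul_add, mul_sub, sum_add_distrib, sum_sub_distrib, hflow, hdiag, sub_mul]
  ring

variable (α β : ℝ) in
noncomputable def partitionFunction (x : S → A → ℝ) : ℝ :=
  ∑ s, (∑ a, exp (x s a / α)) ^ (α / β)

theorem Ravg_le_log_partitionFunction [Nonempty S] [Nonempty A] (x : S → A → ℝ) {α β : ℝ}
    (hα : 0 < α) (hβ : 0 < β) {p : S → A → ℝ} (hp : p ∈ probSimplex S A) :
    Ravg x α β p ≤ β * log (partitionFunction α β x) := by
  have hrow : ∀ s, 0 ≤ ∑ a, p s a := fun s => sum_nonneg fun a _ => hp.1 s a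
  have hz : ∀ s, 0 < ∑ a, exp (x s a / α) := fun s =>
    sum_pos (fun a _ => exp_pos _) univ_nonempty
  have hactions := sum_le_sum fun s (_ : s ∈ univ) => gibbs_variational_le (hp.1 s) (x s) hα
  have hstates := gibbs_variational_le hrow (fun s => α * log (∑ a, exp (x s a / α))) hβ
  have hZ : ∑ s, exp (α * log (∑ a, exp (x s a / α)) / β) = partitionFunction α β x :=
    sum_congr rfl fun s _ => by rw [rpow_def_of_pos (hz s), mul_div_right_comm, mul_comm]
  simp only [hZ, hp.2, div_one, one_mul, mul_left_comm _ α, ← mul_sum] at hstates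
  simp only [← mul_sum, sum_sub_distrib] at hactions
  rw [Ravg_eq_chainRule x α β hp.1]
  linarith

theorem exists_Ravg_eq_log_partitionFunction [Nonempty S] [Nonempty A] (x : S → A → ℝ)
    {α β : ℝ} (hα : α ≠ 0) (hβ : β ≠ 0) :
    ∃ q ∈ probSimplex S A, Ravg x α β q = β * log (partitionFunction α β x) := by
  set z : S → ℝ := fun s => ∑ a, exp (x s a / α)
  set Z := partitionFunction α β x
  have hz : ∀ s, 0 < z s := fun s => sum_pos (fun a _ => exp_pos _) univ_nonempty
  have hZ : 0 < Z := sum_pos (fun s _ => rpow_pos_of_pos (hz s) _) univ_nonempty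
  -- The Gibbs policy: softmax in the actions, with state marginal `∝ z s ^ (α / β)`.
  set q : S → A → ℝ := fun s a => exp (x s a / α) * z s ^ (α / β - 1) / Z
  have hq_pos : ∀ s a, 0 < q s a := fun s a => by positivity
  have hrow : ∀ s, ∑ a, q s a = z s ^ (α / β) / Z := fun s => by
    simp only [q, ← sum_div, ← sum_mul, rpow_sub_one (hz s).ne', ← mul_div_assoc]
    rw [mul_div_cancel_left₀ _ (hz s).ne']
  have hq : q ∈ probSimplex S A := by
    refine ⟨fun s a => (hq_pos s a).le, ?_⟩
    simp only [hrow, ← sum_div]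
    exact div_self hZ.ne'
  refine ⟨q, hq, ?_⟩
  have hterm : ∀ s a, q s a * x s a - α * (q s a * log (q s a))
      - (β - α) * (q s a * log (∑ b, q s b)) = q s a * (β * log Z) := fun s a => by
    have hlog_q : log (q s a) = x s a / α + (α / β - 1) * log (z s) - log Z := by
      rw [log_div (by positivity) hZ.ne', log_mul (exp_pos _).ne' (by positivity), log_exp,
        log_rpow (hz s)]
    have hlog_row : log (∑ b, q s b) = α / β * log (z s) - log Z := by
      rw [hrow, log_div (by positivity) hZ.ne', log_rpow (hz s)]
    rw [hlog_q, hlog_row]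
    field_simp
    ring
  calc Ravg x α β q = ∑ s, ∑ a, (q s a * x s a - α * (q s a * log (q s a))
        - (β - α) * (q s a * log (∑ b, q s b))) := by
        simp only [Ravg, mul_sum, sum_sub_distrib]
    _ = β * log Z := by simp only [hterm, ← sum_mul, hq.2, one_mul]

theorem strong_duality_general {S A : Type} [Fintype S] [Fintype A]
    [Nonempty S] [Nonempty A]
    (P : S → A → S → ℝ)
    (r : S → A → ℝ) (α β : ℝ) (hα : 0 < α) (hβ : 0 < β)
    (hD : (Dset P (S := S) (A := A)).Nonempty) :
    ∃ p ∈ Dset P, (∀ q ∈ Dset P, Ravg r α β q ≤ Ravg r α β p) ∧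
      Ravg r α β p = ⨅ V : S → ℝ, β * Real.log (Zfun P r α β V) := by
  classical
  obtain ⟨p, hpD, hmax⟩ :=
    (isCompact_Dset P).exists_isMaxOn hD (continuous_Ravg r α β).continuousOn
  have hp := mem_Dset_iff.1 hpD
  refine ⟨p, hpD, fun q hq => hmax hq, ?_⟩
  have hweak : ∀ V, Ravg r α β p ≤ β * log (Zfun P r α β V) := fun V => by
    have := Ravg_le_log_partitionFunction (Adv P r V) hα hβ hp.1
    rwa [Ravg_Adv, hp.2, zero_dotProduct, add_zero] at this
  refine (ciInf_eq_of_forall_ge_of_forall_gt_exists_lt hweak fun m hm => ?_).symm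
  obtain ⟨φ, hφ⟩ := exists_dual_add_lt_of_forall_feasible_lt isCompact_probSimplex
    (concaveOn_Ravg r hα.le hβ.le) (continuous_Ravg r α β).continuousOn (stationarityResidual P)
    (stationarityResidual P).continuous_of_finiteDimensional.continuousOn hp.1 hp.2
    fun q hq hq₀ => (hmax (mem_Dset_iff.2 ⟨hq, hq₀⟩)).trans_lt hm
  set V : S → ℝ := fun s' => φ fun s => if s' = s then 1 else 0
  have hφV : ∀ y, φ y = y ⬝ᵥ V := fun y => φ.toLinearMap.pi_apply_eq_sum_univ y
  obtain ⟨q, hq, hqZ⟩ := exists_Ravg_eq_log_partitionFunction (Adv P r V) hα.ne' hβ.ne'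
  refine ⟨V, ?_⟩
  calc β * log (Zfun P r α β V) = Ravg r α β q + φ (stationarityResidual P q) := by
        rw [hφV, ← Ravg_Adv]; exact hqZ.symm
    _ < m := hφ q hq

/-- strong duality: for `α > 0`, `β > 0` and `D` nonempty, the
supremum of `R_{α,β}` over `D` is attained and equals `⨅ V, β log Z_V`. -/
theorem strong_duality {S A : Type} [Fintype S] [Fintype A]
    [Nonempty S] [Nonempty A]
    (P : S → A → S → ℝ) (hP0 : ∀ s a s', 0 ≤ P s a s')
    (hP1 : ∀ s a, (∑ s', P s a s') = 1)
    (r : S → A → ℝ) (α β : ℝ) (hα : 0 < α) (hβ : 0 < β)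
    (hD : (Dset P (S := S) (A := A)).Nonempty) :
    ∃ p ∈ Dset P, (∀ q ∈ Dset P, Ravg r α β q ≤ Ravg r α β p) ∧
      Ravg r α β p = ⨅ V : S → ℝ, β * Real.log (Zfun P r α β V) :=
  strong_duality_general P r α β hα hβ hD
end

section
/- Let α > 0 and β > 0, let V : S → ℝ, set λ = β(1 − log Z_V), and define p(s,a) = exp(λ/β − 1) · (Σ_b exp(A_V(s,b)/α))^{α/β − 1} · exp(A_V(s,a)/α). Then Σ_{s,a} p(s,a) = 1, and the Lagrangian L(p, V, λ) = Σ_{s,a} p(s,a) r(s,a) − α Σ_{s,a} p(s,a) log p(s,a) − (β − α) Σ_{s,a} p(s,a) log (Σ_b p(s,b)) + Σ_{s'} V(s') ( Σ_{s,a} P(s'|s,a) p(s,a) − Σ_b p(s',b) ) + λ ( Σ_{s,a} p(s,a) − 1 ) equals β · log Z_V. -/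
open Finset

/-!
With `κ = α/β`, `T_s = Σ_b exp(A_V(s,b)/α)` and `Z_V = Σ_s T_s^κ`, the policy is
`p(s,a) = Z_V⁻¹ T_s^{κ-1} exp(A_V(s,a)/α)`, whose state marginal is `q(s) = Z_V⁻¹ T_s^κ`;
hence `p` is normalized. Taking logarithms, the `log T_s` terms cancel in
`α log p(s,a) + (β - α) log q(s) = A_V(s,a) - β log Z_V`, because `βκ = α`.
Substituting this into the Lagrangian leaves `β log Z_V` plus `Σ p (r - A_V)` plus the flow term,
and the flow term is exactly `Σ p (A_V - r)`.
-/

lemma Real.sum_exp_pos {ι : Type*} [Fintype ι] [Nonempty ι] (f : ι → ℝ) :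
    0 < ∑ i, Real.exp (f i) :=
  sum_pos (fun _ _ => Real.exp_pos _) univ_nonempty

namespace NestedGibbs

open Real

variable {S A : Type} [Fintype S] [Fintype A] (κ : ℝ) (x : S → A → ℝ)

noncomputable def partition : ℝ := ∑ s, (∑ a, exp (x s a)) ^ κ

noncomputable def prob (s : S) (a : A) : ℝ :=
  (partition κ x)⁻¹ * (∑ b, exp (x s b)) ^ (κ - 1) * exp (x s a)

lemma partition_pos [Nonempty S] [Nonempty A] : 0 < partition κ x :=
  sum_pos (fun s _ => rpow_pos_of_pos (sum_exp_pos (x s)) κ) univ_nonempty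

lemma sum_prob [Nonempty A] (s : S) :
    ∑ a, prob κ x s a = (partition κ x)⁻¹ * (∑ b, exp (x s b)) ^ κ := by
  have hT := (sum_exp_pos (x s)).ne'
  simp only [prob, ← mul_sum]
  rw [mul_assoc, rpow_sub_one hT, div_mul_cancel₀ _ hT]

lemma sum_sum_prob [Nonempty S] [Nonempty A] : ∑ s, ∑ a, prob κ x s a = 1 := by
  simp only [sum_prob, ← mul_sum]
  exact inv_mul_cancel₀ (partition_pos κ x).ne'

lemma log_prob [Nonempty S] [Nonempty A] (s : S) (a : A) :
    log (prob κ x s a) =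
      -log (partition κ x) + (κ - 1) * log (∑ b, exp (x s b)) + x s a := by
  have hZ := partition_pos κ x
  have hT := sum_exp_pos (x s)
  rw [prob, log_mul (by positivity) (exp_ne_zero _), log_mul (by positivity) (by positivity),
    log_inv, log_rpow hT, log_exp]

lemma log_sum_prob [Nonempty S] [Nonempty A] (s : S) :
    log (∑ a, prob κ x s a) = -log (partition κ x) + κ * log (∑ b, exp (x s b)) := by
  have hZ := partition_pos κ x
  have hT := sum_exp_pos (x s)
  rw [sum_prob, log_mul (by positivity) (by positivity), log_inv, log_rpow hT]

end NestedGibbs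

section Lagrangian

variable {S A : Type} [Fintype S] [Fintype A]

noncomputable def lagrangian (P : S → A → S → ℝ) (r : S → A → ℝ) (α β : ℝ) (V : S → ℝ)
    (lam : ℝ) (p : S → A → ℝ) : ℝ :=
  (∑ s, ∑ a, p s a * r s a)
    - α * ∑ s, ∑ a, p s a * Real.log (p s a)
    - (β - α) * ∑ s, ∑ a, p s a * Real.log (∑ b, p s b)
    + (∑ s', V s' * ((∑ s, ∑ a, P s a s' * p s a) - ∑ b, p s' b))
    + lam * ((∑ s, ∑ a, p s a) - 1)

lemma sum_mul_flow_eq (P : S → A → S → ℝ) (r : S → A → ℝ) (V : S → ℝ) (p : S → A → ℝ) :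
    ∑ s', V s' * ((∑ s, ∑ a, P s a s' * p s a) - ∑ b, p s' b) =
      ∑ s, ∑ a, p s a * (Adv P r V s a - r s a) := by
  have hAdv : ∀ s a, Adv P r V s a - r s a = (∑ s', V s' * P s a s') - V s := fun s a => by
    rw [Adv]; ring
  simp only [hAdv, mul_sub, sum_sub_distrib, mul_sum]
  congr 1
  · rw [sum_comm]
    refine sum_congr rfl fun s _ => ?_
    rw [sum_comm]
    exact sum_congr rfl fun a _ => sum_congr rfl fun s' _ => by ring
  · exact sum_congr rfl fun s _ => sum_congr rfl fun a _ => by ring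

lemma lagrangian_eq_of_log_eq (P : S → A → S → ℝ) (r : S → A → ℝ) (α β : ℝ) (V : S → ℝ)
    (lam c : ℝ) (p : S → A → ℝ) (hp : ∑ s, ∑ a, p s a = 1)
    (hlog : ∀ s a, α * Real.log (p s a) + (β - α) * Real.log (∑ b, p s b) =
      Adv P r V s a - c) :
    lagrangian P r α β V lam p = c := by
  have hentropy : α * (∑ s, ∑ a, p s a * Real.log (p s a))
      + (β - α) * ∑ s, ∑ a, p s a * Real.log (∑ b, p s b) =
        ∑ s, ∑ a, p s a * (Adv P r V s a - c) := by
    simp only [mul_sum, ← sum_add_distrib, ← hlog]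
    exact sum_congr rfl fun s _ => sum_congr rfl fun a _ => by ring
  have hsplit : ∑ s, ∑ a, p s a * (Adv P r V s a - c) =
      (∑ s, ∑ a, p s a * (Adv P r V s a - r s a)) + ∑ s, ∑ a, p s a * r s a
        - c * ∑ s, ∑ a, p s a := by
    simp only [mul_sum, ← sum_add_distrib, ← sum_sub_distrib]
    exact sum_congr rfl fun s _ => sum_congr rfl fun a _ => by ring
  rw [lagrangian, sum_mul_flow_eq, hp]
  linear_combination -hentropy - hsplit + c * hp

end Lagrangian

theorem lagrangian_dual_value_general {S A : Type} [Fintype S] [Fintype A]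
    [Nonempty S] [Nonempty A]
    (P : S → A → S → ℝ)
    (r : S → A → ℝ) (α β : ℝ) (hα : 0 < α) (hβ : 0 < β)
    (V : S → ℝ) (lam : ℝ) (hlam : lam = β * (1 - Real.log (Zfun P r α β V)))
    (p : S → A → ℝ)
    (hp : ∀ s a, p s a =
      Real.exp (lam / β - 1) *
        (∑ b, Real.exp (Adv P r V s b / α)) ^ (α / β - 1) *
        Real.exp (Adv P r V s a / α)) :
    (∑ s, ∑ a, p s a) = 1 ∧
      ((∑ s, ∑ a, p s a * r s a)
        - α * ∑ s, ∑ a, p s a * Real.log (p s a)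
        - (β - α) * ∑ s, ∑ a, p s a * Real.log (∑ b, p s b)
        + (∑ s', V s' * ((∑ s, ∑ a, P s a s' * p s a) - ∑ b, p s' b))
        + lam * ((∑ s, ∑ a, p s a) - 1))
      = β * Real.log (Zfun P r α β V) := by
  set x : S → A → ℝ := fun s a => Adv P r V s a / α with hx
  have hZ : Zfun P r α β V = NestedGibbs.partition (α / β) x := rfl
  have hexp : Real.exp (lam / β - 1) = (NestedGibbs.partition (α / β) x)⁻¹ := by
    have hexponent : lam / β - 1 = -Real.log (Zfun P r α β V) := by
      rw [hlam]
      field_simp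
      ring
    rw [hexponent, Real.exp_neg, hZ, Real.exp_log (NestedGibbs.partition_pos _ x)]
  have hp_eq : p = NestedGibbs.prob (α / β) x := by
    funext s a
    rw [hp, hexp]
    rfl
  subst hp_eq
  refine ⟨NestedGibbs.sum_sum_prob _ x, ?_⟩
  refine lagrangian_eq_of_log_eq P r α β V lam _ _ (NestedGibbs.sum_sum_prob _ x) fun s a => ?_
  rw [NestedGibbs.log_prob, NestedGibbs.log_sum_prob, ← hZ, hx]
  field_simp
  ring

/-- with `λ = β(1 − log Z_V)` and
`p(s,a) = exp(λ/β − 1) (Σ_b exp(A_V(s,b)/α))^{α/β−1} exp(A_V(s,a)/α)`,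
`p` is normalized and the Lagrangian `L(p,V,λ)` equals `β log Z_V`. -/
theorem lagrangian_dual_value {S A : Type} [Fintype S] [Fintype A]
    [Nonempty S] [Nonempty A]
    (P : S → A → S → ℝ) (hP0 : ∀ s a s', 0 ≤ P s a s')
    (hP1 : ∀ s a, (∑ s', P s a s') = 1)
    (r : S → A → ℝ) (α β : ℝ) (hα : 0 < α) (hβ : 0 < β)
    (V : S → ℝ) (lam : ℝ) (hlam : lam = β * (1 - Real.log (Zfun P r α β V)))
    (p : S → A → ℝ)
    (hp : ∀ s a, p s a =
      Real.exp (lam / β - 1) *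
        (∑ b, Real.exp (Adv P r V s b / α)) ^ (α / β - 1) *
        Real.exp (Adv P r V s a / α)) :
    (∑ s, ∑ a, p s a) = 1 ∧
      ((∑ s, ∑ a, p s a * r s a)
        - α * ∑ s, ∑ a, p s a * Real.log (p s a)
        - (β - α) * ∑ s, ∑ a, p s a * Real.log (∑ b, p s b)
        + (∑ s', V s' * ((∑ s, ∑ a, P s a s' * p s a) - ∑ b, p s' b))
        + lam * ((∑ s, ∑ a, p s a) - 1))
      = β * Real.log (Zfun P r α β V) :=
  lagrangian_dual_value_general P r α β hα hβ V lam hlam p hp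
end
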